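/- arXiv:math/0508042 — 6 statements merged into one kernel-verified Lean document; each statement's English description precedes it below -/
import Mathlib

section
/- Let N₁(n) denote the number of ones and N₀(n) the number of zeros in the binary expansion of the positive integer n. Then Euler's constant γ satisfies γ = Σ_{n=2}^∞ (-1)^n · (N₁(⌊n/2⌋) + N₀(⌊n/2⌋))/n, where the series converges. -/
open Real Filter

def N1 (n : ℕ) : ℕ := (Nat.digits 2 n).count 1

def N0 (n : ℕ) : ℕ := (Nat.digits 2 n).count 0

/-!
For `n ≥ 2` the binary expansion of `⌊n/2⌋` has `⌊log₂ n⌋` digits, so the partial sums are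
`S_N = ∑_{n=2}^N (-1)^n ⌊log₂ n⌋ / n`. With `A_N = ∑_{n=1}^N (-1)^n / n`, `k = ⌊log₂ N⌋` and
`γ'_m = H_m - log m`, induction on `N` gives `S_N = k (A_N + log 2) + γ'_{2^k} - 2^{-k}`: only the
steps `N + 1 = 2^{k+1}` raise `k`, and they are absorbed by `A_{2m} = H_m - H_{2m}`.
The same identity gives `A_{2m} + log 2 = γ'_m - γ'_{2m} ∈ [0, 1/m]`, so `A_N + log 2 = O(1/N)`;
as `2^k ≤ N`, the first term tends to `0` and the second to `γ`.
-/

open Finset Topology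

lemma List.count_one_add_count_zero {l : List ℕ} (hl : ∀ d ∈ l, d < 2) :
    l.count 1 + l.count 0 = l.length := by
  rw [List.length_eq_countP_add_countP (· == 1), List.count, List.count]
  congr 1
  refine List.countP_congr fun d hd => ?_
  have := hl d hd
  interval_cases d <;> rfl

lemma N1_add_N0_div_two (n : ℕ) : N1 (n / 2) + N0 (n / 2) = Nat.log 2 n := by
  rw [N1, N0, List.count_one_add_count_zero fun d => Nat.digits_lt_base one_lt_two]
  rcases Nat.eq_zero_or_pos (n / 2) with h | h
  · rw [h, Nat.log_eq_zero_iff.2 (by omega)]; rfl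
  · rw [Nat.length_digits 2 _ one_lt_two h.ne', Nat.log_div_base]
    have : 1 ≤ Nat.log 2 n := Nat.le_log_of_pow_le one_lt_two (by omega)
    omega

noncomputable def altHarmonic (n : ℕ) : ℝ := ∑ k ∈ Icc 1 n, (-1) ^ k / k

lemma altHarmonic_succ (n : ℕ) :
    altHarmonic (n + 1) = altHarmonic n + (-1) ^ (n + 1) / (n + 1 : ℕ) :=
  sum_Icc_succ_top (by omega) _

lemma altHarmonic_two_mul (m : ℕ) : altHarmonic (2 * m) = harmonic m - harmonic (2 * m) := by
  induction m with
  | zero => simp [altHarmonic]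
  | succ m ih =>
    rw [show 2 * (m + 1) = 2 * m + 1 + 1 by ring, altHarmonic_succ, altHarmonic_succ, ih,
      harmonic_succ, harmonic_succ, harmonic_succ]
    simp only [pow_succ, pow_mul]
    push_cast
    field_simp
    ring

lemma altHarmonic_two_mul_add_log_two {m : ℕ} (hm : m ≠ 0) :
    altHarmonic (2 * m) + log 2 = eulerMascheroniSeq' m - eulerMascheroniSeq' (2 * m) := by
  rw [altHarmonic_two_mul, eulerMascheroniSeq', eulerMascheroniSeq', if_neg hm,
    if_neg (by omega), Nat.cast_mul, Nat.cast_two, log_mul two_ne_zero (by positivity)]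
  ring

lemma altHarmonic_two_mul_add_log_two_nonneg {m : ℕ} (hm : m ≠ 0) :
    0 ≤ altHarmonic (2 * m) + log 2 := by
  rw [altHarmonic_two_mul_add_log_two hm, sub_nonneg]
  exact strictAnti_eulerMascheroniSeq'.antitone (by omega)

lemma altHarmonic_two_mul_add_log_two_le {m : ℕ} (hm : m ≠ 0) :
    altHarmonic (2 * m) + log 2 ≤ 1 / m := by
  have hlt := eulerMascheroniSeq_lt_eulerMascheroniSeq' m (2 * m)
  have hlog : log (m + 1) - log m ≤ 1 / m := by
    have hm' : (0 : ℝ) < m := by positivity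
    rw [← log_div (by positivity) hm'.ne']
    calc log ((m + 1) / m) ≤ (m + 1) / m - 1 := log_le_sub_one_of_pos (by positivity)
      _ = 1 / m := by field_simp; ring
  have hseq' : eulerMascheroniSeq' m = harmonic m - log m := if_neg hm
  rw [altHarmonic_two_mul_add_log_two hm, hseq']
  rw [eulerMascheroniSeq] at hlt
  linarith

lemma abs_altHarmonic_add_log_two_le {N : ℕ} (hN : 2 ≤ N) :
    |altHarmonic N + log 2| ≤ 3 / N := by
  obtain ⟨m, rfl | rfl⟩ := Nat.even_or_odd' N
  · have hm : m ≠ 0 := by omega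
    have hm' : (0 : ℝ) < m := by positivity
    rw [abs_of_nonneg (altHarmonic_two_mul_add_log_two_nonneg hm)]
    calc altHarmonic (2 * m) + log 2 ≤ 1 / m := altHarmonic_two_mul_add_log_two_le hm
      _ ≤ 3 / (2 * m : ℕ) := by push_cast; rw [div_le_div_iff₀ hm' (by positivity)]; linarith
  · have hm : m ≠ 0 := by omega
    have hm' : (1 : ℝ) ≤ m := by exact_mod_cast Nat.one_le_iff_ne_zero.2 hm
    have h0 := altHarmonic_two_mul_add_log_two_nonneg hm
    have h1 := altHarmonic_two_mul_add_log_two_le hm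
    have hodd : altHarmonic (2 * m + 1) = altHarmonic (2 * m) - 1 / (2 * m + 1) := by
      rw [altHarmonic_succ, pow_succ, pow_mul]; push_cast; ring
    have hlast_pos : 0 ≤ 1 / (2 * m + 1 : ℝ) := by positivity
    have hlast_le : 1 / (2 * m + 1 : ℝ) ≤ 1 / m := by gcongr; linarith
    have hthird : 1 / (m : ℝ) ≤ 3 / (2 * m + 1) := by
      rw [div_le_div_iff₀ (by positivity) (by positivity)]; linarith
    rw [hodd, abs_le]
    push_cast
    constructor <;> linarith

lemma sum_Icc_neg_one_pow_mul_log_div (N : ℕ) :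
    ∑ n ∈ Icc 2 N, (-1 : ℝ) ^ n * Nat.log 2 n / n =
      Nat.log 2 N * (altHarmonic N + log 2) + eulerMascheroniSeq' (2 ^ Nat.log 2 N)
        - ((2 : ℝ) ^ Nat.log 2 N)⁻¹ := by
  induction N with
  | zero => simp [eulerMascheroniSeq'_one]
  | succ N ih =>
    rcases Nat.eq_zero_or_pos N with rfl | hN
    · simp [eulerMascheroniSeq'_one]
    set k := Nat.log 2 N
    have hkN : 2 ^ k ≤ N := Nat.pow_log_le_self 2 hN.ne'
    have hNk : N + 1 ≤ 2 ^ (k + 1) := Nat.lt_pow_succ_log_self one_lt_two N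
    rw [sum_Icc_succ_top (by omega), ih, altHarmonic_succ]
    rcases hNk.lt_or_eq with hlt | heq
    · rw [Nat.log_eq_of_pow_le_of_lt_pow (by omega) hlt]
      ring
    · have hA : altHarmonic (N + 1) + log 2 = eulerMascheroniSeq' (2 ^ k)
          - eulerMascheroniSeq' (N + 1) := by
        rw [heq, pow_succ']
        exact altHarmonic_two_mul_add_log_two (by positivity)
      have hsign : (-1 : ℝ) ^ (N + 1) = 1 := by rw [heq, pow_succ', pow_mul]; simp
      have hcast : ((N + 1 : ℕ) : ℝ) = 2 * 2 ^ k := by rw [heq]; push_cast; ring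
      rw [altHarmonic_succ, hsign, hcast] at hA
      rw [heq, Nat.log_pow one_lt_two, ← heq, hsign, hcast]
      push_cast
      linear_combination -hA

lemma tendsto_nat_log_two_atTop : Tendsto (Nat.log 2) atTop atTop :=
  tendsto_atTop_atTop_of_monotone Nat.log_monotone fun k => ⟨2 ^ k, (Nat.log_pow one_lt_two k).ge⟩

lemma tendsto_nat_log_mul_altHarmonic_add_log_two :
    Tendsto (fun N => (Nat.log 2 N : ℝ) * (altHarmonic N + log 2)) atTop (𝓝 0) := by
  have hdecay : Tendsto (fun N => 3 * (Nat.log 2 N * (1 / 2 : ℝ) ^ Nat.log 2 N)) atTop (𝓝 0) := by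
    simpa using ((tendsto_self_mul_const_pow_of_lt_one (r := 1 / 2) (by norm_num)
      (by norm_num)).comp tendsto_nat_log_two_atTop).const_mul 3
  refine squeeze_zero_norm' ?_ hdecay
  filter_upwards [eventually_ge_atTop 2] with N hN
  have hpow : (2 : ℝ) ^ Nat.log 2 N ≤ N := by exact_mod_cast Nat.pow_log_le_self 2 (by omega)
  calc ‖(Nat.log 2 N : ℝ) * (altHarmonic N + log 2)‖
      = Nat.log 2 N * |altHarmonic N + log 2| := by simp
    _ ≤ Nat.log 2 N * (3 / 2 ^ Nat.log 2 N) := by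
      gcongr
      exact (abs_altHarmonic_add_log_two_le hN).trans (by gcongr)
    _ = 3 * (Nat.log 2 N * (1 / 2 : ℝ) ^ Nat.log 2 N) := by rw [one_div_pow]; ring

/-- Vacca's series: `γ = ∑_{n=2}^∞ (-1)^n (N₁(⌊n/2⌋) + N₀(⌊n/2⌋)) / n`. -/
theorem gamma_eq_vacca_series :
    Tendsto (fun N : ℕ => ∑ n ∈ Finset.Icc 2 N,
        (-1 : ℝ) ^ n * ((N1 (n / 2) + N0 (n / 2) : ℕ) : ℝ) / n)
      atTop (nhds Real.eulerMascheroniConstant) := by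
  simp_rw [N1_add_N0_div_two, sum_Icc_neg_one_pow_mul_log_div]
  have hpow : Tendsto (fun N => 2 ^ Nat.log 2 N) atTop atTop :=
    (tendsto_pow_atTop_atTop_of_one_lt one_lt_two).comp tendsto_nat_log_two_atTop
  have hpow' : Tendsto (fun N => (2 : ℝ) ^ Nat.log 2 N) atTop atTop :=
    (tendsto_pow_atTop_atTop_of_one_lt one_lt_two).comp tendsto_nat_log_two_atTop
  simpa using (tendsto_nat_log_mul_altHarmonic_add_log_two.add
    (tendsto_eulerMascheroniSeq'.comp hpow)).sub (tendsto_inv_atTop_zero.comp hpow')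
end

section
/- Let q be an integer with q ≥ 2, and define the polynomial P_q(x) = (qx+1)(qx+2)⋯(qx+q−1) · Σ_{m=1}^{q−1} m(q−m)/(qx+m). Then Euler's constant γ satisfies γ = 1/2 + Σ_{n=1}^∞ ⌊log_q(qn)⌋ · P_q(n) / (qn(qn+1)(qn+2)⋯(qn+q)). -/
open Real Filter Finset

/-!
Let `δ(x) = (1/x + 1/(x+1))/2 - log (1 + 1/x)` be the error of the trapezoidal rule for
`∫_x^{x+1} dt/t`. The partial sums of `∑_{m ≥ 1} δ(m)` are averages of `H_M - log (M+1)` and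
`H_{M+1} - log (M+1)`, so the series sums to `γ - 1/2`.

For `n ≥ 1` the logarithms telescope in `δ(n) - ∑_{j<q} δ(qn+j)`, and partial fractions identify
the rational function that is left with `P_q(n) / (qn(qn+1)⋯(qn+q))`. Write `ℓ(m) = ⌊log_q m⌋`.
Since `ℓ(qn+j) = ℓ(n) + 1` for `j < q` and `ℓ` vanishes below `q`, regrouping the absolutely
convergent series `∑ ℓ(m) δ(m)` (as `δ(m) = O(1/m²)`) along the blocks `qn, …, qn+q-1` gives
`∑_{n ≥ 1} (ℓ(n) + 1) (δ(n) - ∑_{j<q} δ(qn+j)) = ∑_{m ≥ 1} δ(m)`; and `ℓ(n) + 1 = ⌊log_q (qn)⌋`.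
-/

noncomputable def trapezoidError (x : ℝ) : ℝ := (1 / x + 1 / (x + 1)) / 2 - log ((x + 1) / x)

lemma trapezoidError_eq {x : ℝ} (hx : 0 < x) :
    trapezoidError x = (1 / x + 1 / (x + 1)) / 2 - (log (x + 1) - log x) := by
  rw [trapezoidError, log_div (by positivity) hx.ne']

lemma abs_trapezoidError_le {x : ℝ} (hx : 0 < x) : |trapezoidError x| ≤ 1 / x ^ 2 := by
  have hratio : 0 < (x + 1) / x := by positivity
  have hupper : log ((x + 1) / x) ≤ 1 / x := by
    have hsub : (x + 1) / x - 1 = 1 / x := by field_simp; ring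
    exact hsub ▸ log_le_sub_one_of_pos hratio
  have hlower : 1 / (x + 1) ≤ log ((x + 1) / x) := by
    have := one_sub_inv_le_log_of_pos hratio
    rwa [inv_div, one_sub_div (by positivity), add_sub_cancel_left] at this
  have hgap : 1 / x - 1 / (x + 1) ≤ 2 * (1 / x ^ 2) := by
    rw [div_sub_div _ _ hx.ne' (by positivity), div_le_iff₀ (by positivity)]
    field_simp
    nlinarith
  rw [trapezoidError, abs_le]
  constructor <;> linarith

lemma sum_range_trapezoidError_natCast_succ (M : ℕ) :
    ∑ m ∈ range M, trapezoidError (m + 1) =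
      ((harmonic M - log (M + 1)) + (harmonic (M + 1) - log ((M + 1 : ℕ) : ℝ)) - 1) / 2 := by
  induction M with
  | zero => simp [harmonic_succ]
  | succ M ih =>
    rw [sum_range_succ, ih, trapezoidError_eq (by positivity), harmonic_succ (M + 1),
      harmonic_succ M]
    push_cast
    ring_nf

lemma hasSum_trapezoidError_natCast_succ :
    HasSum (fun m : ℕ ↦ trapezoidError (m + 1)) (eulerMascheroniConstant - 1 / 2) := by
  have hsummable : Summable (fun m : ℕ ↦ trapezoidError (m + 1)) := by
    refine .of_norm_bounded ((summable_nat_add_iff 1).mpr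
      (summable_one_div_nat_pow.mpr one_lt_two)) fun m ↦ ?_
    simpa using abs_trapezoidError_le (Nat.cast_add_one_pos m)
  rw [hsummable.hasSum_iff_tendsto_nat, show eulerMascheroniConstant - 1 / 2 =
    (eulerMascheroniConstant + eulerMascheroniConstant - 1) / 2 by ring]
  exact (((tendsto_harmonic_sub_log_add_one.add (tendsto_harmonic_sub_log.comp
    (tendsto_add_atTop_nat 1))).sub_const 1).div_const 2).congr
      fun M ↦ (sum_range_trapezoidError_natCast_succ M).symm

lemma trapezoidError_sub_sum_trapezoidError {y : ℝ} (hy : 0 < y) {q : ℕ} (hq : q ≠ 0) :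
    trapezoidError y - ∑ j ∈ range q, trapezoidError (q * y + j) =
      (1 / y + 1 / (y + 1)) / 2 - ∑ j ∈ range q, (1 / (q * y + j) + 1 / (q * y + j + 1)) / 2 := by
  have hq' : (0 : ℝ) < q := by exact_mod_cast Nat.pos_of_ne_zero hq
  have hlog : ∑ j ∈ range q, (log (q * y + j + 1) - log (q * y + j)) = log (y + 1) - log y := by
    have := sum_range_sub (fun j : ℕ ↦ log (q * y + j)) q
    simp only [Nat.cast_succ, Nat.cast_zero, add_zero, ← add_assoc] at this
    rw [this, show (q : ℝ) * y + q = q * (y + 1) by ring, log_mul hq'.ne' (by positivity),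
      log_mul hq'.ne' hy.ne']
    ring
  rw [sum_congr rfl fun j _ ↦ trapezoidError_eq (by positivity), sum_sub_distrib, hlog,
    trapezoidError_eq hy]
  ring

lemma prod_range_add_one_eq_mul_prod_Icc {x : ℝ} {q : ℕ} (hq : q ≠ 0) :
    ∏ j ∈ range (q + 1), (x + j) = x * (∏ m ∈ Icc 1 (q - 1), (x + m)) * (x + q) := by
  rw [prod_range_succ, prod_range_eq_mul_Ico _ (Nat.pos_of_ne_zero hq),
    Icc_sub_one_right_eq_Ico_of_not_isMin (by simpa using hq)]
  simp

noncomputable def addisonRatio (q : ℕ) (x : ℝ) : ℝ :=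
  (∏ m ∈ Icc 1 (q - 1), (x + m)) * (∑ m ∈ Icc 1 (q - 1), m * (q - m) / (x + m)) /
    ∏ j ∈ range (q + 1), (x + j)

lemma addisonRatio_eq_sum {x : ℝ} (hx : 0 < x) {q : ℕ} (hq : q ≠ 0) :
    addisonRatio q x = ∑ m ∈ range q, m * (q - m) / (x * (x + m) * (x + q)) := by
  have hprod : 0 < ∏ m ∈ Icc 1 (q - 1), (x + m) := prod_pos fun m _ ↦ by positivity
  rw [addisonRatio, prod_range_add_one_eq_mul_prod_Icc hq, mul_comm x, mul_assoc,
    mul_div_mul_left _ _ hprod.ne', sum_div, sum_range_eq_add_Ico _ (Nat.pos_of_ne_zero hq),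
    Icc_sub_one_right_eq_Ico_of_not_isMin (by simpa using hq)]
  simp only [Nat.cast_zero, zero_mul, zero_div, zero_add]
  refine sum_congr rfl fun m _ ↦ ?_
  rw [div_div]
  ring

lemma sum_range_natCast (q : ℕ) : ∑ m ∈ range q, (m : ℝ) = q * (q - 1) / 2 := by
  induction q with
  | zero => simp
  | succ q ih => rw [sum_range_succ, ih]; push_cast; ring

lemma addisonRatio_eq {x : ℝ} (hx : 0 < x) {q : ℕ} (hq : q ≠ 0) :
    addisonRatio q x =
      (q / x + q / (x + q)) / 2 - ∑ j ∈ range q, (1 / (x + j) + 1 / (x + j + 1)) / 2 := by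
  have hq' : (q : ℝ) ≠ 0 := by exact_mod_cast hq
  have hpartial : ∀ m ∈ range q, m * (q - m) / (x * (x + m) * (x + q)) =
      1 / x + m * (1 / (x + q) - 1 / x) / q - 1 / (x + m) := by
    intro m _
    field_simp
    ring
  have hsum : ∑ m ∈ range q, (1 / x + m * (1 / (x + q) - 1 / x) / q - 1 / (x + m)) =
      q / x + (q - 1) / 2 * (1 / (x + q) - 1 / x) - ∑ m ∈ range q, 1 / (x + m) := by
    rw [sum_sub_distrib, sum_add_distrib, sum_const, card_range, nsmul_eq_mul, ← sum_div,
      ← sum_mul, sum_range_natCast]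
    field_simp
  have htelescope :
      ∑ j ∈ range q, 1 / (x + j + 1) = ∑ j ∈ range q, 1 / (x + j) + (1 / (x + q) - 1 / x) := by
    have := sum_range_sub (fun j : ℕ ↦ 1 / (x + j)) q
    simp only [Nat.cast_succ, Nat.cast_zero, add_zero, ← add_assoc, sum_sub_distrib] at this
    linarith
  rw [addisonRatio_eq_sum hx hq, sum_congr rfl hpartial, hsum, ← sum_div, sum_add_distrib,
    htelescope]
  field_simp
  ring

lemma trapezoidError_sub_sum_trapezoidError_eq_addisonRatio {y : ℝ} (hy : 0 < y) {q : ℕ}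
    (hq : q ≠ 0) :
    trapezoidError y - ∑ j ∈ range q, trapezoidError (q * y + j) = addisonRatio q (q * y) := by
  have hq' : (0 : ℝ) < q := by exact_mod_cast Nat.pos_of_ne_zero hq
  rw [trapezoidError_sub_sum_trapezoidError hy hq, addisonRatio_eq (by positivity) hq,
    show (q : ℝ) / (q * y) = 1 / y by field_simp,
    show (q : ℝ) / (q * y + q) = 1 / (y + 1) by field_simp]

lemma summable_log_div_sq : Summable fun m : ℕ ↦ log m / (m : ℝ) ^ 2 := by
  refine .of_nonneg_of_le (fun m ↦ by positivity) (fun m ↦ ?_)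
    ((summable_nat_rpow.mpr (by norm_num : (-3 / 2 : ℝ) < -1)).mul_left 2)
  rcases m.eq_zero_or_pos with rfl | hm
  · simp
  have hm : (0 : ℝ) < m := by exact_mod_cast hm
  have hrpow : (m : ℝ) ^ (-3 / 2 : ℝ) = (m : ℝ) ^ (1 / 2 : ℝ) / (m : ℝ) ^ 2 := by
    rw [← rpow_natCast, ← rpow_sub hm]; norm_num
  rw [hrpow, mul_div_assoc', div_le_div_iff_of_pos_right (by positivity)]
  linarith [log_le_rpow_div hm.le (by norm_num : (0 : ℝ) < 1 / 2)]

lemma summable_natLog_div_sq (b : ℕ) : Summable fun m : ℕ ↦ (Nat.log b m : ℝ) / (m : ℝ) ^ 2 := by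
  rcases le_or_gt b 1 with hb | hb
  · simp [Nat.log_of_left_le_one hb]
  refine .of_nonneg_of_le (fun m ↦ by positivity) (fun m ↦ ?_)
    (summable_log_div_sq.div_const (log 2))
  rw [div_right_comm]
  gcongr
  calc (Nat.log b m : ℝ) ≤ Nat.log 2 m := by exact_mod_cast Nat.log_anti_left one_lt_two hb
    _ ≤ logb 2 m := natLog_le_logb m 2
    _ = log m / log 2 := by rw [logb]

lemma Nat.log_mul_add {b n j : ℕ} (hb : 1 < b) (hn : n ≠ 0) (hj : j < b) :
    Nat.log b (b * n + j) = Nat.log b n + 1 := by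
  have hdiv : (b * n + j) / b * b = n * b := by
    rw [Nat.mul_add_div (by omega), Nat.div_eq_of_lt hj, add_zero]
  rw [← Nat.log_div_mul_self, hdiv, Nat.log_mul_base hb hn]

lemma floor_log_mul_natCast_div_log {b k : ℕ} (hb : 1 < b) (hk : k ≠ 0) :
    ⌊log (b * k) / log b⌋ = Nat.log b k + 1 := by
  rw [log_div_log, ← Nat.cast_mul, floor_logb_natCast (by positivity), Int.log_natCast,
    mul_comm, Nat.log_mul_base hb hk]
  push_cast
  rfl

theorem HasSum.sum_range_mul_add {α : Type*} [AddCommMonoid α] [TopologicalSpace α]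
    [ContinuousAdd α] [RegularSpace α] {f : ℕ → α} {a : α} (hf : HasSum f a) (q : ℕ) [NeZero q] :
    HasSum (fun n ↦ ∑ j ∈ range q, f (q * n + j)) a := by
  refine ((Nat.divModEquiv q).symm.hasSum_iff.mpr hf).prod_fiberwise fun n ↦ ?_
  simpa [Fin.sum_univ_eq_sum_range (fun j ↦ f (q * n + j)), mul_comm] using
    hasSum_fintype (fun j : Fin q ↦ f (n * q + j))

theorem hasSum_log_succ_mul_addisonRatio {q : ℕ} (hq : 1 < q) :
    HasSum (fun n : ℕ ↦ ((Nat.log q (n + 1) + 1 : ℕ) : ℝ) * addisonRatio q (q * (n + 1)))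
      (eulerMascheroniConstant - 1 / 2) := by
  have : NeZero q := ⟨by omega⟩
  set u : ℕ → ℝ := fun m ↦ Nat.log q m * trapezoidError m with hu_def
  have hu_small : ∀ j < q, u j = 0 := fun j hj ↦ by simp [hu_def, Nat.log_of_lt hj]
  have hu : HasSum u (∑' m, u m) := by
    refine (Summable.of_norm_bounded (summable_natLog_div_sq q) fun m ↦ ?_).hasSum
    rcases m.eq_zero_or_pos with rfl | hm
    · simp [hu_def]
    rw [norm_mul, Real.norm_natCast, Real.norm_eq_abs, div_eq_mul_one_div]
    exact mul_le_mul_of_nonneg_left (abs_trapezoidError_le (x := m) (by exact_mod_cast hm))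
      (by positivity)
  have hu_succ : HasSum (fun n ↦ u (n + 1)) (∑' m, u m) := by
    simpa [hu_small 0 (by omega)] using (hasSum_nat_add_iff' 1).mpr hu
  have hu_blocks : HasSum (fun n ↦ ∑ j ∈ range q, u (q * (n + 1) + j)) (∑' m, u m) := by
    simpa [sum_eq_zero fun j hj ↦ hu_small j (mem_range.mp hj)] using
      (hasSum_nat_add_iff' 1).mpr (hu.sum_range_mul_add q)
  have hsum := (hu_succ.add hasSum_trapezoidError_natCast_succ).sub hu_blocks
  rw [add_sub_cancel_left] at hsum
  refine hsum.congr_fun fun n ↦ ?_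
  have hblock : ∀ j ∈ range q, u (q * (n + 1) + j) =
      (Nat.log q (n + 1) + 1 : ℕ) * trapezoidError (q * ((n : ℝ) + 1) + j) := fun j hj ↦ by
    simp only [hu_def]
    rw [Nat.log_mul_add hq (Nat.add_one_ne_zero n) (mem_range.mp hj)]
    push_cast
    rfl
  rw [sum_congr rfl hblock, ← mul_sum,
    ← trapezoidError_sub_sum_trapezoidError_eq_addisonRatio (Nat.cast_add_one_pos n) (by omega)]
  simp only [hu_def]
  push_cast
  ring

/-- Generalized Addison series for Euler's constant, with the polynomial
`P_q(x) = (qx+1)(qx+2)⋯(qx+q-1) ∑_{m=1}^{q-1} m(q-m)/(qx+m)`. -/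
theorem gamma_eq_generalized_addison_series (q : ℕ) (hq : 2 ≤ q) :
    Real.eulerMascheroniConstant = 1 / 2 + ∑' n : ℕ,
      (⌊Real.log ((q : ℝ) * ((n : ℝ) + 1)) / Real.log q⌋ : ℝ) *
        ((∏ m ∈ Finset.Icc 1 (q - 1), ((q : ℝ) * ((n : ℝ) + 1) + (m : ℝ))) *
          ∑ m ∈ Finset.Icc 1 (q - 1),
            ((m : ℝ) * ((q : ℝ) - (m : ℝ))) / ((q : ℝ) * ((n : ℝ) + 1) + (m : ℝ))) /
        ∏ j ∈ Finset.range (q + 1), ((q : ℝ) * ((n : ℝ) + 1) + (j : ℝ)) := by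
  rw [← sub_eq_iff_eq_add']
  refine (HasSum.tsum_eq ?_).symm
  convert hasSum_log_succ_mul_addisonRatio hq using 2 with n
  rw [mul_div_assoc, ← Nat.cast_succ, floor_log_mul_natCast_div_log hq n.succ_ne_zero]
  push_cast
  rfl
end

section
/- Euler's constant γ satisfies Addison's series: γ = 1/2 + Σ_{n=1}^∞ ⌊log₂(2n)⌋ / (2n(2n+1)(2n+2)). -/
open Real Filter Topology Finset

/-!
Write `t n = 1 / (2n(2n+1)(2n+2))`. Partial fractions give `t n = G n - G (n + 1)` with
`G p = H_{2p} - H_p + 1/(4p)`, and `G p → log 2` at rate `O(1/p)` because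
`0 < H_n - log n - γ ≤ 1/n`. On the dyadic block `2^m ≤ n < 2^(m+1)` the weight `⌊log₂ 2n⌋` is
the constant `m + 1`, so summation by parts gives the partial sum over `n < 2^m` in closed form,
`H_{2^m} - 1/2 - 2^{-(m+1)} - m G(2^m)`. Since `m (G(2^m) - log 2) → 0` and
`H_{2^m} - m log 2 → γ`, it tends to `γ - 1/2`.
-/

lemma eulerMascheroniConstant_lt_harmonic_sub_log {n : ℕ} (hn : n ≠ 0) :
    eulerMascheroniConstant < harmonic n - log n := by
  simpa [eulerMascheroniSeq', hn] using eulerMascheroniConstant_lt_eulerMascheroniSeq' n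

lemma harmonic_sub_log_le_eulerMascheroniConstant_add {n : ℕ} (hn : n ≠ 0) :
    harmonic n - log n ≤ eulerMascheroniConstant + 1 / n := by
  have hγ : harmonic n - log (n + 1) < eulerMascheroniConstant :=
    eulerMascheroniSeq_lt_eulerMascheroniConstant n
  have hn' : (0 : ℝ) < n := by positivity
  have hlog : log (n + 1) - log n ≤ 1 / n := by
    rw [← log_div (by positivity) hn'.ne']
    calc log ((n + 1) / n) ≤ (n + 1) / n - 1 := log_le_sub_one_of_pos (by positivity)
      _ = 1 / n := by field_simp; ring
  linarith

lemma floor_log_div_log_natCast (b n : ℕ) : ⌊log n / log b⌋ = Nat.log b n := by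
  rw [log_div_log, floor_logb_natCast n.cast_nonneg, Int.log_natCast]

namespace Addison

noncomputable def term (n : ℕ) : ℝ := 1 / (2 * n * (2 * n + 1) * (2 * n + 2))

noncomputable def termPrimitive (p : ℕ) : ℝ := harmonic (2 * p) - harmonic p + 1 / (4 * p)

lemma term_eq_termPrimitive_sub {n : ℕ} (hn : n ≠ 0) :
    term n = termPrimitive n - termPrimitive (n + 1) := by
  have hn' : (n : ℝ) ≠ 0 := by exact_mod_cast hn
  have h2 : (2 * n + 1 : ℝ) ≠ 0 := by positivity
  have h3 : (n + 1 : ℝ) ≠ 0 := by positivity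
  simp only [term, termPrimitive, show 2 * (n + 1) = 2 * n + 1 + 1 by ring, harmonic_succ]
  push_cast
  field_simp
  ring

lemma sum_Ico_term {p q : ℕ} (hp : p ≠ 0) (hpq : p ≤ q) :
    ∑ n ∈ Ico p q, term n = termPrimitive p - termPrimitive q :=
  calc ∑ n ∈ Ico p q, term n = ∑ n ∈ Ico p q, -(termPrimitive (n + 1) - termPrimitive n) :=
        sum_congr rfl fun n hn => by
          rw [term_eq_termPrimitive_sub (by rw [mem_Ico] at hn; omega), neg_sub]
    _ = termPrimitive p - termPrimitive q := by rw [sum_neg_distrib, sum_Ico_sub _ hpq, neg_sub]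

lemma abs_termPrimitive_sub_log_two_le {p : ℕ} (hp : p ≠ 0) :
    |termPrimitive p - log 2| ≤ 1 / p := by
  have hp' : (0 : ℝ) < p := by positivity
  have h2p : 2 * p ≠ 0 := by omega
  have hA0 := eulerMascheroniConstant_lt_harmonic_sub_log h2p
  have hA1 := harmonic_sub_log_le_eulerMascheroniConstant_add h2p
  have hB0 := eulerMascheroniConstant_lt_harmonic_sub_log hp
  have hB1 := harmonic_sub_log_le_eulerMascheroniConstant_add hp
  push_cast at hA0 hA1
  rw [log_mul two_ne_zero hp'.ne'] at hA0 hA1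
  have e1 : 1 / (2 * (p : ℝ)) = 1 / 2 * (1 / p) := by field_simp
  have e2 : 1 / (4 * (p : ℝ)) = 1 / 4 * (1 / p) := by field_simp
  have : 0 < 1 / (p : ℝ) := by positivity
  rw [termPrimitive, abs_le]
  constructor <;> linarith

noncomputable def weightedTerm (n : ℕ) : ℝ := Nat.log 2 (2 * n) * term n

lemma natLog_two_mul_of_mem_Ico {m n : ℕ} (hn : n ∈ Ico (2 ^ m) (2 ^ (m + 1))) :
    Nat.log 2 (2 * n) = m + 1 := by
  rw [mem_Ico] at hn
  exact Nat.log_eq_of_pow_le_of_lt_pow (by rw [pow_succ']; omega) (by rw [pow_succ']; omega)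

lemma sum_Ico_two_pow_weightedTerm (m : ℕ) :
    ∑ n ∈ Ico (2 ^ m) (2 ^ (m + 1)), weightedTerm n
      = (m + 1) * (termPrimitive (2 ^ m) - termPrimitive (2 ^ (m + 1))) := by
  rw [← sum_Ico_term (by positivity) (Nat.pow_le_pow_right two_pos m.le_succ), mul_sum]
  refine sum_congr rfl fun n hn => ?_
  rw [weightedTerm, natLog_two_mul_of_mem_Ico hn]
  push_cast
  rfl

lemma termPrimitive_two_pow (m : ℕ) :
    termPrimitive (2 ^ m) = harmonic (2 ^ (m + 1)) - harmonic (2 ^ m) + 1 / (4 * 2 ^ m) := by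
  rw [termPrimitive, pow_succ']
  push_cast
  rfl

lemma sum_range_two_pow_weightedTerm (m : ℕ) :
    ∑ n ∈ range (2 ^ m), weightedTerm n
      = harmonic (2 ^ m) - 1 / 2 - 1 / 2 ^ (m + 1) - m * termPrimitive (2 ^ m) := by
  induction m with
  | zero => norm_num [weightedTerm]
  | succ m ih =>
    rw [← sum_range_add_sum_Ico _ (Nat.pow_le_pow_right two_pos m.le_succ), ih,
      sum_Ico_two_pow_weightedTerm, termPrimitive_two_pow m]
    push_cast
    ring

lemma weightedTerm_le (n : ℕ) : weightedTerm n ≤ 1 / n ^ 2 := by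
  rcases Nat.eq_zero_or_pos n with rfl | hn
  · simp [weightedTerm]
  have hn' : (1 : ℝ) ≤ n := by exact_mod_cast hn
  have hlog : (Nat.log 2 (2 * n) : ℝ) ≤ 2 * n := by exact_mod_cast Nat.log_le_self 2 (2 * n)
  rw [weightedTerm, term, mul_one_div, div_le_div_iff₀ (by positivity) (by positivity)]
  nlinarith

lemma summable_weightedTerm : Summable weightedTerm :=
  .of_nonneg_of_le (fun n => by unfold weightedTerm term; positivity) weightedTerm_le
    (summable_one_div_nat_pow.mpr one_lt_two)

lemma tendsto_mul_termPrimitive_two_pow_sub_log_two :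
    Tendsto (fun m : ℕ => m * (termPrimitive (2 ^ m) - log 2)) atTop (𝓝 0) := by
  refine squeeze_zero_norm (fun m => ?_) (tendsto_pow_const_div_const_pow_of_one_lt 1 one_lt_two)
  have h := abs_termPrimitive_sub_log_two_le (p := 2 ^ m) (by positivity)
  push_cast at h
  rw [norm_mul, norm_eq_abs, norm_eq_abs, Nat.abs_cast, pow_one, ← mul_one_div]
  gcongr

lemma tendsto_sum_range_two_pow_weightedTerm :
    Tendsto (fun m : ℕ => ∑ n ∈ range (2 ^ m), weightedTerm n) atTop
      (𝓝 (eulerMascheroniConstant - 1 / 2)) := by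
  have hH := tendsto_harmonic_sub_log.comp (tendsto_pow_atTop_atTop_of_one_lt one_lt_two)
  have hpow : Tendsto (fun m : ℕ => 1 / (2 : ℝ) ^ (m + 1)) atTop (𝓝 0) :=
    (tendsto_inv_atTop_zero.comp (tendsto_pow_atTop_atTop_of_one_lt one_lt_two)).comp
      (tendsto_add_atTop_nat 1) |>.congr fun m => by simp
  have := ((hH.sub_const (1 / 2)).sub hpow).sub tendsto_mul_termPrimitive_two_pow_sub_log_two
  rw [sub_zero, sub_zero] at this
  refine this.congr fun m => ?_
  simp only [Function.comp_apply, sum_range_two_pow_weightedTerm, Nat.cast_pow, Nat.cast_ofNat,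
    log_pow]
  ring

lemma hasSum_weightedTerm : HasSum weightedTerm (eulerMascheroniConstant - 1 / 2) := by
  have h := summable_weightedTerm.hasSum
  rwa [tendsto_nhds_unique (h.tendsto_sum_nat.comp (tendsto_pow_atTop_atTop_of_one_lt one_lt_two))
    tendsto_sum_range_two_pow_weightedTerm] at h

end Addison

open Addison in
/-- Addison's series: `γ = 1/2 + ∑_{n=1}^∞ ⌊log₂(2n)⌋ / (2n(2n+1)(2n+2))`. -/
theorem gamma_eq_addison_series :
    Real.eulerMascheroniConstant = 1 / 2 + ∑' n : ℕ,
      (⌊Real.log (2 * ((n : ℝ) + 1)) / Real.log 2⌋ : ℝ) /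
        (2 * ((n : ℝ) + 1) * (2 * ((n : ℝ) + 1) + 1) * (2 * ((n : ℝ) + 1) + 2)) := by
  have hsummand (n : ℕ) :
      (⌊log (2 * ((n : ℝ) + 1)) / log 2⌋ : ℝ) /
        (2 * ((n : ℝ) + 1) * (2 * ((n : ℝ) + 1) + 1) * (2 * ((n : ℝ) + 1) + 2))
        = weightedTerm (n + 1) := by
    have h := floor_log_div_log_natCast 2 (2 * (n + 1))
    push_cast at h
    rw [h, weightedTerm, term]
    push_cast
    ring
  have hshift := (hasSum_nat_add_iff' 1).mpr hasSum_weightedTerm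
  rw [tsum_congr hsummand, hshift.tsum_eq]
  simp [weightedTerm]
end

section
/- ln(4/π) = Σ_{n=1}^∞ (-1)^{n−1} (1/n − ln((n+1)/n)), where the series converges. -/
open Real Filter Finset Topology

/-! Pairing the terms `2i+1` and `2i+2`, the partial sum up to `2k` becomes `(H_{2k} - H_k) - log W_k`,
where `H` are the harmonic numbers and `W_k` the partial Wallis products. Euler–Mascheroni gives
`H_{2k} - H_k → log 2` and Wallis' formula `W_k → π/2`, so the even partial sums tend to
`log 2 - log (π/2) = log (4/π)`; the odd ones follow because the terms tend to `0`. -/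

theorem tendsto_of_tendsto_two_mul_of_tendsto_two_mul_add_one {α : Type*} {l : Filter α}
    {f : ℕ → α} (h_even : Tendsto (fun k => f (2 * k)) atTop l)
    (h_odd : Tendsto (fun k => f (2 * k + 1)) atTop l) : Tendsto f atTop l := by
  intro s hs
  obtain ⟨N, hN⟩ := eventually_atTop.1 ((h_even.eventually_mem hs).and (h_odd.eventually_mem hs))
  refine mem_map.2 (eventually_atTop.2 ⟨2 * N, fun n hn => ?_⟩)
  obtain ⟨k, rfl | rfl⟩ := Nat.even_or_odd' n
  · exact (hN k (by omega)).1
  · exact (hN k (by omega)).2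

section Alternating

variable {R : Type*} [Ring R]

theorem sum_Icc_two_mul_neg_one_pow_mul (f : ℕ → R) (k : ℕ) :
    ∑ n ∈ Icc 1 (2 * k), (-1 : R) ^ (n - 1) * f n =
      ∑ i ∈ range k, (f (2 * i + 1) - f (2 * i + 2)) := by
  induction k with
  | zero => simp
  | succ k ih =>
    rw [show 2 * (k + 1) = 2 * k + 1 + 1 by ring, sum_Icc_succ_top (by omega),
      sum_Icc_succ_top (by omega), ih, sum_range_succ, Nat.add_sub_cancel, Nat.add_sub_cancel,
      pow_succ, (even_two_mul k).neg_one_pow]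
    simp only [one_mul, neg_one_mul, sub_eq_add_neg, add_assoc]

theorem tendsto_sum_Icc_neg_one_pow_mul_of_tendsto_sum_pairs [TopologicalSpace R]
    [ContinuousAdd R] {f : ℕ → R} {a : R} (hf : Tendsto f atTop (𝓝 0))
    (h : Tendsto (fun k => ∑ i ∈ range k, (f (2 * i + 1) - f (2 * i + 2))) atTop (𝓝 a)) :
    Tendsto (fun N => ∑ n ∈ Icc 1 N, (-1 : R) ^ (n - 1) * f n) atTop (𝓝 a) := by
  simp_rw [← sum_Icc_two_mul_neg_one_pow_mul] at h
  refine tendsto_of_tendsto_two_mul_of_tendsto_two_mul_add_one h ?_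
  have hf_odd : Tendsto (fun k => f (2 * k + 1)) atTop (𝓝 0) :=
    hf.comp (StrictMono.tendsto_atTop fun a b hab => by omega)
  simpa [sum_Icc_succ_top, pow_mul] using h.add hf_odd

end Alternating

theorem harmonic_two_mul_sub_harmonic (k : ℕ) :
    harmonic (2 * k) - harmonic k = ∑ i ∈ range k, (1 / (2 * i + 1 : ℚ) - 1 / (2 * i + 2)) := by
  induction k with
  | zero => simp
  | succ k ih =>
    rw [show 2 * (k + 1) = 2 * k + 1 + 1 by ring, harmonic_succ, harmonic_succ, harmonic_succ,
      sum_range_succ, ← ih]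
    push_cast
    field_simp
    ring

theorem tendsto_sum_range_one_div_odd_sub_one_div_even :
    Tendsto (fun k : ℕ => ∑ i ∈ range k, (1 / (2 * i + 1 : ℝ) - 1 / (2 * i + 2))) atTop
      (𝓝 (log 2)) := by
  have h_two_mul : Tendsto (fun k : ℕ => 2 * k) atTop atTop :=
    StrictMono.tendsto_atTop fun a b hab => by omega
  rw [← add_zero (log 2), ← sub_self eulerMascheroniConstant]
  refine (((tendsto_harmonic_sub_log.comp h_two_mul).sub tendsto_harmonic_sub_log).const_add
    (log 2)).congr' ?_
  filter_upwards [eventually_ne_atTop 0] with k hk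
  have hk' : (k : ℝ) ≠ 0 := by exact_mod_cast hk
  have h_harmonic := congrArg (fun q : ℚ => (q : ℝ)) (harmonic_two_mul_sub_harmonic k)
  push_cast at h_harmonic
  simp only [Function.comp_apply, Nat.cast_mul, Nat.cast_ofNat, log_mul two_ne_zero hk',
    ← h_harmonic]
  ring

theorem Real.Wallis.log_W (k : ℕ) :
    log (Wallis.W k) =
      ∑ i ∈ range k, (log ((2 * i + 2) / (2 * i + 1)) - log ((2 * i + 3) / (2 * i + 2))) := by
  rw [Wallis.W, log_prod fun i _ => by positivity]
  refine sum_congr rfl fun i _ => ?_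
  rw [log_mul (by positivity) (by positivity), ← inv_div (2 * (i : ℝ) + 3), log_inv,
    ← sub_eq_add_neg]

theorem tendsto_one_div_sub_log_add_one_div :
    Tendsto (fun n : ℕ => 1 / (n : ℝ) - log ((n + 1) / n)) atTop (𝓝 0) := by
  have hlog : Tendsto (fun n : ℕ => log (((n : ℝ) + 1) / n)) atTop (𝓝 0) := by
    refine tendsto_log_nat_add_one_sub_log.congr' ?_
    filter_upwards [eventually_ne_atTop 0] with n hn
    rw [log_div (by positivity) (by exact_mod_cast hn)]
  simpa using tendsto_one_div_atTop_nhds_zero_nat.sub hlog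

/-- `ln(4/π) = ∑_{n=1}^∞ (-1)^{n-1} (1/n - ln((n+1)/n))`. -/
theorem log_four_div_pi_eq_alternating_series :
    Tendsto (fun N : ℕ => ∑ n ∈ Finset.Icc 1 N,
        (-1 : ℝ) ^ (n - 1) * (1 / (n : ℝ) - Real.log (((n : ℝ) + 1) / (n : ℝ))))
      atTop (nhds (Real.log (4 / Real.pi))) := by
  refine tendsto_sum_Icc_neg_one_pow_mul_of_tendsto_sum_pairs
    tendsto_one_div_sub_log_add_one_div ?_
  have h_value : log (4 / π) = log 2 - log (π / 2) := by
    rw [← log_div two_ne_zero (by positivity)]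
    congr 1
    field_simp
    norm_num
  rw [h_value]
  refine (tendsto_sum_range_one_div_odd_sub_one_div_even.sub
    (Wallis.tendsto_W_nhds_pi_div_two.log (by positivity))).congr fun k => ?_
  rw [Wallis.log_W, ← sum_sub_distrib]
  refine sum_congr rfl fun i _ => ?_
  push_cast
  ring_nf
end

section
/- Let A_n = 1/n − ln((n+1)/n) and Δ⁺(n) = N₁(n) + N₀(n), where N₁(n) and N₀(n) count the ones and zeros in the binary expansion of n. Then for every positive integer k, Σ_{n=1}^{2^k−1} A_n = Σ_{n=1}^{2^k−1} Δ⁺(n)/(2n(2n+1)) + Σ_{n=2^{k−1}}^{2^k−1} Δ⁺(n) A_n. -/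
open Real

/-- `A n = 1/n - ln((n+1)/n)`. -/
noncomputable def A (n : ℕ) : ℝ := 1 / (n : ℝ) - Real.log (((n : ℝ) + 1) / (n : ℝ))

/-!
Because `log ((2n+1)/(2n)) + log ((2n+2)/(2n+1)) = log ((n+1)/n)`, each term splits as
`A n = A (2n) + A (2n+1) + 1/(2n(2n+1))`, and appending a binary digit raises `Δ⁺ = N₁ + N₀` by one:
`Δ⁺(2n) = Δ⁺(2n+1) = Δ⁺(n) + 1`. Multiplying the split by `Δ⁺(n)` and summing over a dyadic block
`[2^(k-1), 2^k)` trades the weighted sum over that block for the weighted sum over the next block,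
minus the plain sum of `A` over it, plus the correction terms `Δ⁺(n)/(2n(2n+1))`; induction on `k`
then gives the identity.
-/

open Finset

lemma N1_add_N0_two_mul_add {n r : ℕ} (hr : r < 2) (hnr : 0 < 2 * n + r) :
    N1 (2 * n + r) + N0 (2 * n + r) = N1 n + N0 n + 1 := by
  have hdigits : Nat.digits 2 (2 * n + r) = r :: Nat.digits 2 n := by
    rw [add_comm, Nat.digits_add 2 one_lt_two r n hr (by omega)]
  unfold N1 N0
  rw [hdigits, List.count_cons, List.count_cons]
  interval_cases r <;> simp <;> omega

lemma A_eq_A_two_mul_add_A_two_mul_add_one {n : ℕ} (hn : 0 < n) :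
    A n = A (2 * n) + A (2 * n + 1) + 1 / (2 * (n : ℝ) * (2 * (n : ℝ) + 1)) := by
  have hx : (0 : ℝ) < n := by exact_mod_cast hn
  have hlog : log ((2 * n + 1) / (2 * n)) + log ((2 * n + 1 + 1) / (2 * n + 1))
      = log ((n + 1) / n : ℝ) := by
    rw [← log_mul (by positivity) (by positivity)]
    congr 1
    field_simp
    ring
  unfold A
  push_cast
  rw [← hlog]
  field_simp
  ring

lemma sum_Ico_two_mul {M : Type*} [AddCommMonoid M] (f : ℕ → M) {a b : ℕ} (h : a ≤ b) :
    ∑ m ∈ Ico (2 * a) (2 * b), f m = ∑ n ∈ Ico a b, (f (2 * n) + f (2 * n + 1)) := by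
  induction b, h using Nat.le_induction with
  | base => simp
  | succ b hb ih =>
    rw [sum_Ico_succ_top hb, mul_add_one, sum_Ico_succ_top (by omega),
      sum_Ico_succ_top (by omega), ih, add_assoc]

lemma sum_Ico_N1_add_N0_mul_A {a b : ℕ} (ha : 0 < a) (hab : a ≤ b) :
    ∑ n ∈ Ico a b, ((N1 n + N0 n : ℕ) : ℝ) * A n =
      ∑ n ∈ Ico a b, ((N1 n + N0 n : ℕ) : ℝ) / (2 * (n : ℝ) * (2 * (n : ℝ) + 1)) +
      ∑ m ∈ Ico (2 * a) (2 * b), ((N1 m + N0 m : ℕ) : ℝ) * A m -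
      ∑ m ∈ Ico (2 * a) (2 * b), A m := by
  rw [sum_Ico_two_mul _ hab, sum_Ico_two_mul _ hab, add_sub_assoc, ← sum_sub_distrib,
    ← sum_add_distrib]
  refine sum_congr rfl fun n hn => ?_
  have hn : 0 < n := ha.trans_le (mem_Ico.mp hn).1
  have heven := N1_add_N0_two_mul_add (n := n) (r := 0) (by norm_num) (by omega)
  have hodd := N1_add_N0_two_mul_add (n := n) (r := 1) (by norm_num) (by omega)
  rw [add_zero] at heven
  rw [A_eq_A_two_mul_add_A_two_mul_add_one hn, heven, hodd]
  push_cast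
  ring

lemma sum_Ico_A_two_pow (k : ℕ) :
    ∑ n ∈ Ico 1 (2 ^ (k + 1)), A n =
      ∑ n ∈ Ico 1 (2 ^ k), ((N1 n + N0 n : ℕ) : ℝ) / (2 * (n : ℝ) * (2 * (n : ℝ) + 1)) +
      ∑ n ∈ Ico (2 ^ k) (2 ^ (k + 1)), ((N1 n + N0 n : ℕ) : ℝ) * A n := by
  induction k with
  | zero => simp [N1, N0]
  | succ k ih =>
    have hpow : ∀ j, 2 ^ (j + 1) = 2 * 2 ^ j := fun j => pow_succ' 2 j
    have hle : ∀ j, 2 ^ j ≤ 2 ^ (j + 1) := fun j => Nat.pow_le_pow_right two_pos j.le_succ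
    rw [← sum_Ico_consecutive _ Nat.one_le_two_pow (hle (k + 1)), ih,
      ← sum_Ico_consecutive _ Nat.one_le_two_pow (hle k),
      sum_Ico_N1_add_N0_mul_A (Nat.two_pow_pos k) (hle k), ← hpow, ← hpow]
    ring

theorem partial_sum_identity_plus_general (k : ℕ) :
    ∑ n ∈ Finset.Icc 1 (2 ^ k - 1), A n =
      ∑ n ∈ Finset.Icc 1 (2 ^ (k - 1) - 1),
        ((N1 n + N0 n : ℕ) : ℝ) / (2 * (n : ℝ) * (2 * (n : ℝ) + 1)) +
      ∑ n ∈ Finset.Icc (2 ^ (k - 1)) (2 ^ k - 1), ((N1 n + N0 n : ℕ) : ℝ) * A n := by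
  have hpow : ∀ j, ¬IsMin (2 ^ j : ℕ) := fun j => by simp [isMin_iff_eq_bot]
  simp only [Finset.Icc_sub_one_right_eq_Ico_of_not_isMin (hpow _)]
  obtain _ | k := k
  · simp
  · exact sum_Ico_A_two_pow k

/-- Partial-sum identity for the series `∑ A_n` in terms of `Δ⁺(n) = N₁(n) + N₀(n)`. -/
theorem partial_sum_identity_plus (k : ℕ) (hk : 1 ≤ k) :
    ∑ n ∈ Finset.Icc 1 (2 ^ k - 1), A n =
      ∑ n ∈ Finset.Icc 1 (2 ^ (k - 1) - 1),
        ((N1 n + N0 n : ℕ) : ℝ) / (2 * (n : ℝ) * (2 * (n : ℝ) + 1)) +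
      ∑ n ∈ Finset.Icc (2 ^ (k - 1)) (2 ^ k - 1), ((N1 n + N0 n : ℕ) : ℝ) * A n :=
  partial_sum_identity_plus_general k
end

section
/- Let q be an integer with q ≥ 2. Then Euler's constant γ satisfies γ = Σ_{n=1}^∞ ⌊log_q(qn)⌋ · ((q−1)/(qn) − Σ_{m=1}^{q−1} 1/(qn+m)), and also γ = 1 + Σ_{n=1}^∞ ⌊log_q(qn)⌋ · ((q−1)/(qn+q) − Σ_{m=1}^{q−1} 1/(qn+m)). -/
open Real Filter Finset Topology

/-!
Since `⌊log_q (q k)⌋ = Nat.log q k + 1`, the coefficient equals `j + 1` on the whole block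
`q ^ j ≤ k < q ^ (j + 1)`. On such a block the bracket `1/k - ∑_{qk ≤ i < qk + q} 1/i` sums to
`h j - h (j + 1)`, where `h j` is the sum of `1/i` over block `j`, so summation by parts turns the
partial sum up to `k < q ^ J` into `∑_{j < J} (h j - log q) - J (h J - log q)`. The first term is
`H_{q^J - 1} - log (q ^ J) → γ` and `0 ≤ h J - log q ≤ q ^ (-J)` kills the second; as the terms
are nonnegative, this subsequence of partial sums determines the sum. Subtracting the series with
the same coefficients and the telescoping brackets `(1 - 1/q) (1/k - 1/(k + 1))`, whose sum is `1`
by the same computation, gives the second identity.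
-/

theorem sum_range_natCast_add_one_mul_sub {R : Type*} [CommRing R] (d : ℕ → R) (J : ℕ) :
    ∑ j ∈ range J, ((j : R) + 1) * (d j - d (j + 1)) = ∑ j ∈ range J, d j - J * d J := by
  induction J with
  | zero => simp
  | succ J ih =>
    rw [sum_range_succ, ih, sum_range_succ]
    push_cast
    ring

section Blocks

variable {M R : Type*} [AddCommMonoid M] [Semiring R] {q : ℕ}

theorem sum_range_sum_Ico_pow (hq : 0 < q) (g : ℕ → M) (J : ℕ) :
    ∑ j ∈ range J, ∑ k ∈ Ico (q ^ j) (q ^ (j + 1)), g k = ∑ k ∈ Ico 1 (q ^ J), g k := by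
  induction J with
  | zero => simp
  | succ J ih =>
    rw [sum_range_succ, ih,
      sum_Ico_consecutive _ (Nat.one_le_pow _ _ hq) (Nat.pow_le_pow_right hq (J.le_add_right 1))]

theorem sum_Ico_sum_Ico_mul (g : ℕ → M) {a b : ℕ} (hab : a ≤ b) :
    ∑ k ∈ Ico a b, ∑ i ∈ Ico (q * k) (q * (k + 1)), g i = ∑ i ∈ Ico (q * a) (q * b), g i := by
  induction b, hab using Nat.le_induction with
  | base => simp
  | succ b hab ih =>
    rw [sum_Ico_succ_top hab, ih,
      sum_Ico_consecutive _ (Nat.mul_le_mul_left q hab) (Nat.mul_le_mul_left q b.le_succ)]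

theorem sum_Ico_one_pow_log_add_one_mul (hq : 0 < q) (f : ℕ → R) (J : ℕ) :
    ∑ k ∈ Ico 1 (q ^ J), ((Nat.log q k : R) + 1) * f k =
      ∑ j ∈ range J, ((j : R) + 1) * ∑ k ∈ Ico (q ^ j) (q ^ (j + 1)), f k := by
  rw [← sum_range_sum_Ico_pow hq]
  refine sum_congr rfl fun j _ ↦ ?_
  rw [mul_sum]
  refine sum_congr rfl fun k hk ↦ ?_
  rw [Nat.log_eq_of_pow_le_of_lt_pow (mem_Ico.1 hk).1 (mem_Ico.1 hk).2]

theorem floor_log_mul_div_log (hq : 1 < q) {k : ℕ} (hk : k ≠ 0) :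
    ⌊log (q * k) / log q⌋ = Nat.log q k + 1 := by
  rw [log_div_log, ← Nat.cast_mul, floor_logb_natCast (Nat.cast_nonneg _), Int.log_natCast,
    mul_comm, Nat.log_mul_base hq hk]
  push_cast
  rfl

theorem hasSum_log_add_one_mul_of_blocks (hq : 1 < q) {f d : ℕ → ℝ} {L : ℝ}
    (hf : ∀ k, 0 ≤ f (k + 1))
    (hblock : ∀ j, ∑ k ∈ Ico (q ^ j) (q ^ (j + 1)), f k = d j - d (j + 1))
    (hsum : Tendsto (fun J ↦ ∑ j ∈ range J, d j) atTop (𝓝 L))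
    (hd : Tendsto (fun J : ℕ ↦ (J : ℝ) * d J) atTop (𝓝 0)) :
    HasSum (fun n : ℕ ↦ ((Nat.log q (n + 1) : ℝ) + 1) * f (n + 1)) L := by
  set u : ℕ → ℝ := fun n ↦ ((Nat.log q (n + 1) : ℝ) + 1) * f (n + 1)
  have hu : ∀ n, 0 ≤ u n := fun n ↦ mul_nonneg (by positivity) (hf n)
  have hpartial (J : ℕ) : ∑ n ∈ range (q ^ J - 1), u n = ∑ j ∈ range J, d j - J * d J := by
    rw [← sum_range_natCast_add_one_mul_sub, ← sum_congr rfl fun j _ ↦ congrArg _ (hblock j),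
      ← sum_Ico_one_pow_log_add_one_mul (by omega), sum_Ico_eq_sum_range]
    simp only [u, add_comm 1]
  have hφ : Tendsto (fun J ↦ q ^ J - 1) atTop atTop :=
    (tendsto_sub_atTop_nat 1).comp (tendsto_pow_atTop_atTop_of_one_lt hq)
  refine (hasSum_iff_tendsto_nat_of_nonneg hu L).2 <|
    (tendsto_iff_tendsto_subseq_of_monotone
      (fun _ _ h ↦ sum_le_sum_of_subset_of_nonneg (range_mono h) fun i _ _ ↦ hu i) hφ).2 ?_
  simpa [Function.comp_def, hpartial] using hsum.sub hd

end Blocks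

theorem inv_add_one_le_log_add_one_sub_log {x : ℝ} (hx : 0 < x) :
    (x + 1)⁻¹ ≤ log (x + 1) - log x := by
  rw [← log_div (by positivity) hx.ne']
  have := one_sub_inv_le_log_of_pos (show 0 < (x + 1) / x by positivity)
  rw [inv_div] at this
  calc (x + 1)⁻¹ = 1 - x / (x + 1) := by field_simp; ring
    _ ≤ _ := this

theorem log_add_one_sub_log_le_inv {x : ℝ} (hx : 0 < x) :
    log (x + 1) - log x ≤ x⁻¹ := by
  rw [← log_div (by positivity) hx.ne']
  calc log ((x + 1) / x) ≤ (x + 1) / x - 1 := log_le_sub_one_of_pos (by positivity)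
    _ = x⁻¹ := by field_simp; ring

theorem log_sub_log_le_sum_Ico_inv {a b : ℕ} (ha : 0 < a) (hab : a ≤ b) :
    log b - log a ≤ ∑ i ∈ Ico a b, (i : ℝ)⁻¹ := by
  rw [← sum_Ico_sub (fun i : ℕ ↦ log i) hab]
  refine sum_le_sum fun i hi ↦ ?_
  have hi : (0 : ℝ) < i := Nat.cast_pos.2 (ha.trans_le (mem_Ico.1 hi).1)
  push_cast
  exact log_add_one_sub_log_le_inv hi

theorem sum_Ico_inv_le_log_sub_log_add {a b : ℕ} (ha : 0 < a) (hab : a ≤ b) :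
    ∑ i ∈ Ico a b, (i : ℝ)⁻¹ ≤ log b - log a + ((a : ℝ)⁻¹ - (b : ℝ)⁻¹) := by
  rw [← sum_Ico_sub (fun i : ℕ ↦ log i) hab, ← neg_sub_neg,
    ← sum_Ico_sub (fun i : ℕ ↦ -(i : ℝ)⁻¹) hab, ← sum_add_distrib]
  refine sum_le_sum fun i hi ↦ ?_
  have hi : (0 : ℝ) < i := Nat.cast_pos.2 (ha.trans_le (mem_Ico.1 hi).1)
  push_cast
  linarith [inv_add_one_le_log_add_one_sub_log hi]

theorem tendsto_sum_Ico_one_inv_sub_log :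
    Tendsto (fun N : ℕ ↦ ∑ i ∈ Ico 1 N, (i : ℝ)⁻¹ - log N) atTop (𝓝 eulerMascheroniConstant) := by
  rw [← tendsto_add_atTop_iff_nat 1]
  refine tendsto_harmonic_sub_log_add_one.congr fun n ↦ ?_
  rw [harmonic_eq_sum_Icc, ← Ico_add_one_right_eq_Icc]
  push_cast
  rfl

noncomputable def vaccaTerm (q k : ℕ) : ℝ :=
  (k : ℝ)⁻¹ - ∑ i ∈ Ico (q * k) (q * (k + 1)), (i : ℝ)⁻¹

section Vacca

variable {q : ℕ}

theorem vaccaTerm_nonneg {k : ℕ} (hk : 0 < k) : 0 ≤ vaccaTerm q k := by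
  rcases q.eq_zero_or_pos with rfl | hq
  · simp [vaccaTerm]
  rw [vaccaTerm, sub_nonneg]
  calc ∑ i ∈ Ico (q * k) (q * (k + 1)), (i : ℝ)⁻¹
      ≤ #(Ico (q * k) (q * (k + 1))) • ((q * k : ℕ) : ℝ)⁻¹ :=
        sum_le_card_nsmul _ _ _ fun i hi ↦
          inv_anti₀ (by positivity) (Nat.cast_le.2 (mem_Ico.1 hi).1)
    _ = (k : ℝ)⁻¹ := by
        rw [Nat.card_Ico, mul_add_one, Nat.add_sub_cancel_left, nsmul_eq_mul]
        push_cast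
        field_simp

theorem sum_Ico_pow_vaccaTerm (hq : 0 < q) (j : ℕ) :
    ∑ k ∈ Ico (q ^ j) (q ^ (j + 1)), vaccaTerm q k =
      ∑ i ∈ Ico (q ^ j) (q ^ (j + 1)), (i : ℝ)⁻¹ -
        ∑ i ∈ Ico (q ^ (j + 1)) (q ^ (j + 2)), (i : ℝ)⁻¹ := by
  simp only [vaccaTerm]
  rw [sum_sub_distrib, sum_Ico_sum_Ico_mul _ (Nat.pow_le_pow_right hq (j.le_add_right 1)),
    ← pow_succ', ← pow_succ']

theorem sub_sum_Icc_eq_vaccaTerm (hq : 0 < q) {k : ℕ} (hk : 0 < k) :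
    ((q : ℝ) - 1) / (q * k) - ∑ m ∈ Icc 1 (q - 1), 1 / ((q : ℝ) * k + m) = vaccaTerm q k := by
  have hblock : ∑ i ∈ Ico (q * k) (q * (k + 1)), (i : ℝ)⁻¹ =
      ((q * k : ℕ) : ℝ)⁻¹ + ∑ m ∈ Icc 1 (q - 1), 1 / ((q : ℝ) * k + m) := by
    rw [sum_eq_sum_Ico_succ_bot (by nlinarith), ← Ico_add_one_right_eq_Icc,
      Nat.sub_one_add_one hq.ne', mul_add_one, add_comm (q * k), add_comm (q * k),
      ← sum_Ico_add' (fun i : ℕ ↦ (i : ℝ)⁻¹)]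
    push_cast
    simp only [one_div, add_comm]
  rw [vaccaTerm, hblock]
  push_cast
  field_simp
  ring

theorem sum_Ico_pow_inv_sub_log_mem_Icc (hq : 0 < q) (j : ℕ) :
    ∑ i ∈ Ico (q ^ j) (q ^ (j + 1)), (i : ℝ)⁻¹ - log q ∈ Set.Icc 0 ((q : ℝ)⁻¹ ^ j) := by
  have hmono : q ^ j ≤ q ^ (j + 1) := Nat.pow_le_pow_right hq (j.le_add_right 1)
  have hlog : log ((q ^ (j + 1) : ℕ) : ℝ) - log ((q ^ j : ℕ) : ℝ) = log q := by
    push_cast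
    rw [log_pow, log_pow]
    push_cast
    ring
  have hlower := log_sub_log_le_sum_Ico_inv (pow_pos hq j) hmono
  have hupper := sum_Ico_inv_le_log_sub_log_add (pow_pos hq j) hmono
  have : (0 : ℝ) ≤ ((q ^ (j + 1) : ℕ) : ℝ)⁻¹ := by positivity
  rw [hlog] at hlower hupper
  rw [Set.mem_Icc, inv_pow]
  push_cast at *
  constructor <;> linarith

theorem hasSum_log_add_one_mul_vaccaTerm (hq : 1 < q) :
    HasSum (fun n : ℕ ↦ ((Nat.log q (n + 1) : ℝ) + 1) * vaccaTerm q (n + 1))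
      eulerMascheroniConstant := by
  have hq₀ : 0 < q := by omega
  set d : ℕ → ℝ := fun j ↦ ∑ i ∈ Ico (q ^ j) (q ^ (j + 1)), (i : ℝ)⁻¹ - log q
  refine hasSum_log_add_one_mul_of_blocks hq (fun k ↦ vaccaTerm_nonneg k.succ_pos)
    (d := d) (fun j ↦ by simp only [d, sum_Ico_pow_vaccaTerm hq₀]; ring) ?_ ?_
  · refine (tendsto_sum_Ico_one_inv_sub_log.comp (tendsto_pow_atTop_atTop_of_one_lt hq)).congr
      fun J ↦ ?_
    simp only [d, Function.comp_apply, sum_sub_distrib, sum_range_sum_Ico_pow hq₀, sum_const,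
      card_range, nsmul_eq_mul]
    push_cast
    rw [log_pow]
  · have hr : (q : ℝ)⁻¹ < 1 := inv_lt_one_of_one_lt₀ (by exact_mod_cast hq)
    exact tendsto_of_tendsto_of_tendsto_of_le_of_le tendsto_const_nhds
      (tendsto_self_mul_const_pow_of_lt_one (by positivity) hr)
      (fun J ↦ mul_nonneg J.cast_nonneg (sum_Ico_pow_inv_sub_log_mem_Icc hq₀ J).1)
      (fun J ↦ mul_le_mul_of_nonneg_left (sum_Ico_pow_inv_sub_log_mem_Icc hq₀ J).2 J.cast_nonneg)

theorem hasSum_log_add_one_mul_telescope (hq : 1 < q) :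
    HasSum (fun n : ℕ ↦ ((Nat.log q (n + 1) : ℝ) + 1) *
      ((1 - (q : ℝ)⁻¹) * (((n : ℝ) + 1)⁻¹ - ((n : ℝ) + 2)⁻¹))) 1 := by
  have hq₀ : 0 < q := by omega
  set r : ℝ := (q : ℝ)⁻¹
  have hr : r < 1 := inv_lt_one_of_one_lt₀ (by exact_mod_cast hq)
  have hblock (j : ℕ) : ∑ k ∈ Ico (q ^ j) (q ^ (j + 1)), (1 - r) * ((k : ℝ)⁻¹ - (k + 1 : ℝ)⁻¹) =
      (1 - r) * r ^ j - (1 - r) * r ^ (j + 1) := by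
    have ht := sum_Ico_sub (fun k : ℕ ↦ -(k : ℝ)⁻¹) (Nat.pow_le_pow_right hq₀ (j.le_add_right 1))
    simp only [neg_sub_neg, Nat.cast_add, Nat.cast_one, Nat.cast_pow] at ht
    rw [← mul_sum, ht]
    simp only [r, inv_pow]
    ring
  have hsum := hasSum_log_add_one_mul_of_blocks hq (L := 1)
    (fun k ↦ mul_nonneg (by linarith) (sub_nonneg.2 (by gcongr; linarith))) hblock ?_ ?_
  · convert hsum using 3
    push_cast
    ring
  · simpa [← mul_sum, mul_neg_geom_sum] using
      ((tendsto_pow_atTop_nhds_zero_of_lt_one (by positivity) hr).const_sub 1)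
  · simpa [mul_left_comm] using
      (tendsto_self_mul_const_pow_of_lt_one (by positivity) hr).const_mul (1 - r)

end Vacca

/-- The two grouped forms of the generalized Vacca series for Euler's constant. -/
theorem gamma_eq_grouped_vacca_series (q : ℕ) (hq : 2 ≤ q) :
    (Real.eulerMascheroniConstant = ∑' n : ℕ,
      (⌊Real.log ((q : ℝ) * ((n : ℝ) + 1)) / Real.log q⌋ : ℝ) *
        (((q : ℝ) - 1) / ((q : ℝ) * ((n : ℝ) + 1)) -
          ∑ m ∈ Finset.Icc 1 (q - 1), 1 / ((q : ℝ) * ((n : ℝ) + 1) + (m : ℝ)))) ∧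
    Real.eulerMascheroniConstant = 1 + ∑' n : ℕ,
      (⌊Real.log ((q : ℝ) * ((n : ℝ) + 1)) / Real.log q⌋ : ℝ) *
        (((q : ℝ) - 1) / ((q : ℝ) * ((n : ℝ) + 1) + (q : ℝ)) -
          ∑ m ∈ Finset.Icc 1 (q - 1), 1 / ((q : ℝ) * ((n : ℝ) + 1) + (m : ℝ))) := by
  have hcoeff (n : ℕ) :
      (⌊log (q * ((n : ℝ) + 1)) / log q⌋ : ℝ) = (Nat.log q (n + 1) : ℝ) + 1 := by
    exact_mod_cast floor_log_mul_div_log hq n.succ_ne_zero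
  have hterm (n : ℕ) :
      ((q : ℝ) - 1) / (q * ((n : ℝ) + 1)) -
          ∑ m ∈ Icc 1 (q - 1), 1 / ((q : ℝ) * ((n : ℝ) + 1) + m) = vaccaTerm q (n + 1) := by
    exact_mod_cast sub_sum_Icc_eq_vaccaTerm (by omega : 0 < q) n.succ_pos
  have hF := hasSum_log_add_one_mul_vaccaTerm hq
  have hFG := hF.sub (hasSum_log_add_one_mul_telescope hq)
  refine ⟨by simp_rw [hcoeff, hterm, hF.tsum_eq], ?_⟩
  rw [← add_sub_cancel 1 eulerMascheroniConstant, ← hFG.tsum_eq]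
  congr 2 with n
  rw [hcoeff, ← hterm, ← mul_sub]
  have : (q : ℝ) ≠ 0 := by positivity
  field_simp
  ring
end
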